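/- arXiv:0903.3055 — 2 statements merged into one kernel-verified Lean document; each statement's English description precedes it below -/
import Mathlib

section
/- Let (X, ρ) be a locally compact metric space that is an ANR and satisfies the Disjoint Arcs Property. If X × ℝ, equipped with the sum metric, has the Disjoint Disks Property, then X satisfies the Disjoint Path Concordances Property. -/
open unitInterval Topology

noncomputable section

/-- The sum metric on a product of (pseudo)metric spaces:
`ρ̃((x,s),(y,t)) = ρ(x,y) + |s − t|`. -/
def sumDist {X Y : Type*} [PseudoMetricSpace X] [PseudoMetricSpace Y] (a b : X × Y) : ℝ :=
  dist a.1 b.1 + dist a.2 b.2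

/-- `X` is an ANR: for every metric space `Z` and every closed topological embedding
`j : X → Z`, there is an open set `U` with `j(X) ⊆ U ⊆ Z` and a continuous retraction
of `U` onto `j(X)`. -/
def IsANR (X : Type u) [MetricSpace X] : Prop :=
  ∀ (Z : Type u) [MetricSpace Z] (j : X → Z), Topology.IsClosedEmbedding j →
    ∃ U : Set Z, IsOpen U ∧ Set.range j ⊆ U ∧
      ∃ r : C(U, Z), (∀ u : U, r u ∈ Set.range j) ∧
        (∀ u : U, (u : Z) ∈ Set.range j → r u = (u : Z))

/-- The Disjoint Arcs Property: any two paths in `X` can be approximated,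
arbitrarily closely, by paths with disjoint images. -/
def DAP (X : Type*) [MetricSpace X] : Prop :=
  ∀ (f₁ f₂ : C(I, X)) (ε : ℝ), 0 < ε →
    ∃ g₁ g₂ : C(I, X),
      (∀ s, dist (f₁ s) (g₁ s) < ε) ∧ (∀ s, dist (f₂ s) (g₂ s) < ε) ∧
      Set.range g₁ ∩ Set.range g₂ = ∅

/-- A path concordance in `X`: a map `F : D × I → X × I` with
`F(D × {e}) ⊆ X × {e}` for `e ∈ {0,1}`. -/
def IsPathConcordance {X : Type*} [TopologicalSpace X] (F : C(I × I, X × I)) : Prop :=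
  ∀ d : I, (F (d, 0)).2 = 0 ∧ (F (d, 1)).2 = 1

/-- The Disjoint Path Concordances Property (DCP): any two path homotopies
`f₁, f₂ : D × I → X` admit disjoint path concordances `F₁, F₂ : D × I → X × I`
whose `X`-coordinates approximate `f₁, f₂` arbitrarily closely. -/
def DCP (X : Type*) [MetricSpace X] : Prop :=
  ∀ (f₁ f₂ : C(I × I, X)) (ε : ℝ), 0 < ε →
    ∃ F₁ F₂ : C(I × I, X × I),
      IsPathConcordance F₁ ∧ IsPathConcordance F₂ ∧
      Set.range F₁ ∩ Set.range F₂ = ∅ ∧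
      (∀ p, dist (f₁ p) (F₁ p).1 < ε) ∧ (∀ p, dist (f₂ p) (F₂ p).1 < ε)

/-- The Disjoint Disks Property for `X × ℝ`, equipped with the sum metric:
any two maps of the disk `[0,1]²` into `X × ℝ` can be approximated, arbitrarily
closely in the sum metric, by maps with disjoint images. -/
def DDPsum (X : Type*) [MetricSpace X] : Prop :=
  ∀ (f₁ f₂ : C(I × I, X × ℝ)) (ε : ℝ), 0 < ε →
    ∃ g₁ g₂ : C(I × I, X × ℝ),
      (∀ p, sumDist (f₁ p) (g₁ p) < ε) ∧ (∀ p, sumDist (f₂ p) (g₂ p) < ε) ∧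
      Set.range g₁ ∩ Set.range g₂ = ∅

/-!
By the Disjoint Arcs Property the boundary paths `fᵢ(·, 0)` and `fᵢ(·, 1)` can be replaced by
nearby paths with disjoint images. As `X` is a locally compact ANR, it sits as a locally closed
subset of a Banach space with a neighbourhood retraction, so nearby maps are joined by small
homotopies; glued onto `fᵢ` as thin collars, they give maps `fᵢ'` close to `fᵢ` that are
uniformly apart near the bottom and near the top. Lifting `fᵢ'` to `X × ℝ` by its (slightly
stretched) time coordinate, the DDP makes the lifts disjoint, and clamping the `ℝ`-coordinate
back into `I` yields path concordances. Clamping can only create intersections at levels `0`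
and `1`, and points sent there come from the collars, where the two maps are far apart.
-/

open Set Metric
open scoped BoundedContinuousFunction

section Embedding

variable {X : Type u} [MetricSpace X]

/-- Unlike Mathlib's `kuratowskiEmbedding` into `ℓ^∞`, this needs no separability. -/
def kuratowskiMap (x₀ x : X) : X →ᵇ ℝ :=
  BoundedContinuousFunction.mkOfBound ⟨fun y => dist x y - dist x₀ y, by fun_prop⟩
    (2 * dist x x₀) fun a b => by
      have ha := abs_dist_sub_le x x₀ a
      have hb := abs_dist_sub_le x x₀ b
      simp only [ContinuousMap.coe_mk, Real.dist_eq]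
      calc |dist x a - dist x₀ a - (dist x b - dist x₀ b)|
          ≤ |dist x a - dist x₀ a| + |dist x b - dist x₀ b| := abs_sub _ _
        _ ≤ 2 * dist x x₀ := by linarith

theorem kuratowskiMap_apply (x₀ x y : X) : kuratowskiMap x₀ x y = dist x y - dist x₀ y := rfl

theorem isometry_kuratowskiMap (x₀ : X) : Isometry (kuratowskiMap x₀) := by
  refine Isometry.of_dist_eq fun x x' => le_antisymm ?_ ?_
  · refine (BoundedContinuousFunction.dist_le dist_nonneg).2 fun y => ?_
    rw [Real.dist_eq, kuratowskiMap_apply, kuratowskiMap_apply, sub_sub_sub_cancel_right]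
    exact abs_dist_sub_le x x' y
  · have h := BoundedContinuousFunction.dist_coe_le_dist (f := kuratowskiMap x₀ x)
      (g := kuratowskiMap x₀ x') x'
    rwa [Real.dist_eq, kuratowskiMap_apply, kuratowskiMap_apply, sub_sub_sub_cancel_right,
      dist_self, sub_zero, abs_of_nonneg dist_nonneg] at h

end Embedding

theorem Topology.IsEmbedding.isLocallyClosed_range {X Z : Type*} [TopologicalSpace X]
    [LocallyCompactSpace X] [TopologicalSpace Z] [T2Space Z] {e : X → Z} (he : IsEmbedding e) :
    IsLocallyClosed (range e) := by
  refine ((isLocallyClosed_tfae (range e)).out 0 3).2 ?_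
  rintro _ ⟨x, rfl⟩
  obtain ⟨K, hK, hKx⟩ := exists_compact_mem_nhds x
  have hKe : e '' K ∈ 𝓝[range e] e x := he.map_nhds_eq x ▸ Filter.image_mem_map hKx
  obtain ⟨U, hU, hxU, hUK⟩ := mem_nhdsWithin.1 hKe
  refine ⟨U, hxU, hU, fun z hz => ?_⟩
  exact image_subset_range e K <|
    closure_minimal hUK (hK.image he.continuous).isClosed (hU.inter_closure hz)

theorem IsANR.exists_retraction {X E : Type u} [MetricSpace X] [Nonempty X] [MetricSpace E]
    (hX : IsANR X) {e : X → E} (he : IsEmbedding e) (hloc : IsLocallyClosed (range e)) :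
    ∃ W : Set E, IsOpen W ∧ range e ⊆ W ∧ ∃ r : E → X, ContinuousOn r W ∧ ∀ x, r (e x) = x := by
  classical
  -- `range e` is closed in the open set `coborder (range e)`, to which `IsANR` applies
  set V := coborder (range e)
  have hV : IsOpen V := hloc.isOpen_coborder
  set j : X → V := codRestrict e V fun x => subset_coborder (mem_range_self x)
  have hj : IsEmbedding j := he.codRestrict V _
  have hjrange : range j = Subtype.val ⁻¹' range e := by
    ext v
    exact ⟨by rintro ⟨x, rfl⟩; exact ⟨x, rfl⟩, by rintro ⟨x, hx⟩; exact ⟨x, Subtype.ext hx⟩⟩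
  have hjc : IsClosedEmbedding j := ⟨hj, hjrange ▸ isClosed_preimage_val_coborder⟩
  obtain ⟨U, hU, hjU, rr, hrr_mem, hrr_fix⟩ := hX V j hjc
  set g : U → X := fun u => hj.toHomeomorph.symm ⟨rr u, hrr_mem u⟩
  have hg : Continuous g :=
    hj.toHomeomorph.symm.continuous.comp (rr.continuous.subtype_mk _)
  have hWV : ∀ z ∈ Subtype.val '' U, z ∈ V := by rintro _ ⟨v, -, rfl⟩; exact v.2
  have hWU : ∀ z (hz : z ∈ Subtype.val '' U), (⟨z, hWV z hz⟩ : V) ∈ U := by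
    rintro _ ⟨v, hv, rfl⟩; exact hv
  set r : E → X := fun z =>
    if hz : z ∈ Subtype.val '' U then g ⟨⟨z, hWV z hz⟩, hWU z hz⟩ else Classical.arbitrary X
  refine ⟨Subtype.val '' U, hV.isOpenMap_subtype_val U hU,
    fun _ ⟨x, hx⟩ => ⟨j x, hjU (mem_range_self x), hx⟩, r, ?_, fun x => ?_⟩
  · rw [continuousOn_iff_continuous_domRestrict]
    have : (Subtype.val '' U).domRestrict r = fun w => g ⟨⟨w.1, hWV w.1 w.2⟩, hWU w.1 w.2⟩ := by
      funext w; exact dif_pos w.2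
    rw [this]
    exact hg.comp ((continuous_subtype_val.subtype_mk _).subtype_mk _)
  · have hx : e x ∈ Subtype.val '' U := ⟨j x, hjU (mem_range_self x), rfl⟩
    have hfix : rr ⟨⟨e x, hWV _ hx⟩, hWU _ hx⟩ = j x := hrr_fix _ ⟨x, rfl⟩
    simp only [r, dif_pos hx, g, hfix]
    exact hj.toHomeomorph.symm_apply_apply x

theorem IsANR.exists_small_homotopy {X : Type u} [MetricSpace X] [Nonempty X]
    [LocallyCompactSpace X] (hX : IsANR X) {Y : Type*} [TopologicalSpace Y] [CompactSpace Y]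
    (u : C(Y, X)) {ε : ℝ} (hε : 0 < ε) :
    ∃ δ > 0, ∀ v : C(Y, X), (∀ y, dist (u y) (v y) < δ) →
      ∃ H : C(Y × I, X), (∀ y, H (y, 0) = u y) ∧ (∀ y, H (y, 1) = v y) ∧
        ∀ p, dist (H p) (u p.1) < ε := by
  obtain ⟨x₀⟩ := ‹Nonempty X›
  set e := kuratowskiMap x₀
  have he : Isometry e := isometry_kuratowskiMap x₀
  obtain ⟨W, hW, heW, r, hr, hre⟩ :=
    hX.exists_retraction he.isEmbedding he.isEmbedding.isLocallyClosed_range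
  set A := W ∩ (fun z => dist (e (r z)) z) ⁻¹' Iio (ε / 2)
  have hA : IsOpen A :=
    (continuous_dist.comp_continuousOn
      ((he.continuous.comp_continuousOn hr).prodMk continuousOn_id)).isOpen_inter_preimage hW
      isOpen_Iio
  have hKA : range (e ∘ u) ⊆ A := by
    rintro _ ⟨y, rfl⟩
    refine ⟨heW (mem_range_self _), ?_⟩
    simp [hre, half_pos hε]
  obtain ⟨δ, hδ, hδA⟩ :=
    (isCompact_range (he.continuous.comp u.continuous)).exists_thickening_subset_open hA hKA
  refine ⟨min δ (ε / 2), lt_min hδ (half_pos hε), fun v hv => ?_⟩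
  set seg : Y × I → X →ᵇ ℝ := fun p => AffineMap.lineMap (e (u p.1)) (e (v p.1)) (p.2 : ℝ)
  have hseg_dist : ∀ p, dist (seg p) (e (u p.1)) < min δ (ε / 2) := fun p => by
    rw [dist_lineMap_left, he.dist_eq]
    calc ‖(p.2 : ℝ)‖ * dist (u p.1) (v p.1) ≤ 1 * dist (u p.1) (v p.1) := by
          gcongr
          rw [Real.norm_of_nonneg p.2.2.1]
          exact p.2.2.2
      _ < min δ (ε / 2) := by rw [one_mul]; exact hv p.1
  have hsegA : ∀ p, seg p ∈ A := fun p => hδA (mem_thickening_iff.2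
    ⟨_, mem_range_self p.1, (hseg_dist p).trans_le (min_le_left _ _)⟩)
  have hseg : Continuous seg := (he.continuous.comp (u.continuous.comp continuous_fst)).lineMap
    (he.continuous.comp (v.continuous.comp continuous_fst)) (by fun_prop)
  refine ⟨⟨fun p => r (seg p), hr.comp_continuous hseg fun p => (hsegA p).1⟩,
    fun y => ?_, fun y => ?_, fun p => ?_⟩
  · simp [seg, hre]
  · simp [seg, hre]
  · calc dist (r (seg p)) (u p.1) = dist (e (r (seg p))) (e (u p.1)) := (he.dist_eq _ _).symm
      _ ≤ dist (e (r (seg p))) (seg p) + dist (seg p) (e (u p.1)) := dist_triangle _ _ _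
      _ < ε / 2 + ε / 2 := add_lt_add (hsegA p).2 ((hseg_dist p).trans_le (min_le_right _ _))
      _ = ε := add_halves ε

section Collar

variable {Y X : Type*} [TopologicalSpace Y] [TopologicalSpace X]

def ContinuousMap.atTime (f : C(Y × I, X)) (t : I) : C(Y, X) :=
  f.comp ((ContinuousMap.id Y).prodMk (ContinuousMap.const Y t))

@[simp]
theorem ContinuousMap.atTime_apply (f : C(Y × I, X)) (t : I) (y : Y) : f.atTime t y = f (y, t) :=
  rfl

def IsCollared (f : C(Y × I, X)) (h k : C(Y, X)) : Prop :=
  ∃ β > 0, ∀ p : Y × I, ((p.2 : ℝ) ≤ β → f p = h p.1) ∧ (1 - β ≤ (p.2 : ℝ) → f p = k p.1)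

local notation "P" => projIcc (0 : ℝ) 1 zero_le_one

theorem abs_sub_le_of_reparam {α t : ℝ} (hα : 0 < α) (hα' : α ≤ 1 / 4) (ht₀ : 0 ≤ t)
    (ht₁ : t ≤ 1) : |(t - α) / (1 - 2 * α) - t| ≤ 2 * α := by
  have hpos : 0 < 1 - 2 * α := by linarith
  rw [div_sub' hpos.ne', abs_div, abs_of_pos hpos, div_le_iff₀ hpos, abs_le]
  constructor <;> nlinarith

theorem exists_collared_reparam (f Hb Ht : C(Y × I, X)) (hb : ∀ y, Hb (y, 0) = f (y, 0))
    (ht : ∀ y, Ht (y, 0) = f (y, 1)) {α : ℝ} (hα : 0 < α) (hα' : α ≤ 1 / 4) :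
    ∃ f' : C(Y × I, X), IsCollared f' (Hb.atTime 1) (Ht.atTime 1) ∧ ∀ p : Y × I,
      (∃ s, f' p = Hb (p.1, s) ∧ (p.2 : ℝ) ≤ α) ∨
      (∃ t : I, f' p = f (p.1, t) ∧ |(t : ℝ) - p.2| ≤ 2 * α) ∨
      (∃ s, f' p = Ht (p.1, s) ∧ 1 - α ≤ (p.2 : ℝ)) := by
  have hpos : 0 < 1 - 2 * α := by linarith
  set bot : Y × I → X := fun p => Hb (p.1, P (2 - 2 * p.2 / α))
  set mid : Y × I → X := fun p => f (p.1, P ((p.2 - α) / (1 - 2 * α)))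
  set top : Y × I → X := fun p => Ht (p.1, P (2 - 2 * (1 - p.2) / α))
  have hcont : Continuous fun p : Y × I =>
      if (p.2 : ℝ) ≤ α then bot p else if (p.2 : ℝ) ≤ 1 - α then mid p else top p := by
    refine Continuous.if_le (by fun_prop) (Continuous.if_le (by fun_prop) (by fun_prop)
      (by fun_prop) (by fun_prop) fun p hp => ?_) (by fun_prop) (by fun_prop) fun p hp => ?_
    · have h1 : P ((p.2 - α) / (1 - 2 * α)) = 1 :=
        projIcc_eq_one.2 (by rw [hp, le_div_iff₀ hpos]; linarith)
      have h0 : P (2 - 2 * (1 - p.2) / α) = 0 :=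
        projIcc_eq_zero.2 (by rw [hp]; field_simp; linarith)
      simp only [mid, top, h1, h0, ht]
    · have h0 : P (2 - 2 * p.2 / α) = 0 :=
        projIcc_eq_zero.2 (by rw [hp]; field_simp; linarith)
      have h0' : P ((p.2 - α) / (1 - 2 * α)) = 0 :=
        projIcc_eq_zero.2 (by rw [hp, sub_self, zero_div])
      simp only [bot, mid, h0, h0', hb, if_pos (hp.le.trans (by linarith : α ≤ 1 - α))]
  refine ⟨⟨_, hcont⟩, ⟨α / 2, half_pos hα, fun p => ⟨fun hp => ?_, fun hp => ?_⟩⟩, fun p => ?_⟩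
  · have h1 : P (2 - 2 * p.2 / α) = 1 :=
      projIcc_eq_one.2 (by rw [le_sub_comm, div_le_iff₀ hα]; linarith)
    simp [bot, h1, if_pos (hp.trans (half_le_self hα.le))]
  · have h1 : P (2 - 2 * (1 - p.2) / α) = 1 :=
      projIcc_eq_one.2 (by rw [le_sub_comm, div_le_iff₀ hα]; linarith)
    simp [top, h1, if_neg (by linarith : ¬ (p.2 : ℝ) ≤ α),
      if_neg (by linarith : ¬ (p.2 : ℝ) ≤ 1 - α)]
  · by_cases hbot : (p.2 : ℝ) ≤ α
    · exact Or.inl ⟨_, if_pos hbot, hbot⟩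
    by_cases hmid : (p.2 : ℝ) ≤ 1 - α
    · refine Or.inr (Or.inl ⟨_, (if_neg hbot).trans (if_pos hmid), ?_⟩)
      calc |(P ((p.2 - α) / (1 - 2 * α)) : ℝ) - p.2|
          = |(P ((p.2 - α) / (1 - 2 * α)) : ℝ) - P p.2| := by rw [projIcc_val]
        _ ≤ |(p.2 - α) / (1 - 2 * α) - p.2| := abs_projIcc_sub_projIcc _
        _ ≤ 2 * α := abs_sub_le_of_reparam hα hα' p.2.2.1 p.2.2.2
    · exact Or.inr (Or.inr ⟨_, (if_neg hbot).trans (if_neg hmid), by linarith⟩)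

end Collar

theorem exists_collared_of_homotopies {Y X : Type*} [PseudoMetricSpace Y] [CompactSpace Y]
    [PseudoMetricSpace X] (f Hb Ht : C(Y × I, X)) (hb : ∀ y, Hb (y, 0) = f (y, 0))
    (ht : ∀ y, Ht (y, 0) = f (y, 1)) {ε : ℝ} (hε : 0 < ε)
    (hHb : ∀ p, dist (Hb p) (f (p.1, 0)) < ε) (hHt : ∀ p, dist (Ht p) (f (p.1, 1)) < ε) :
    ∃ f' : C(Y × I, X), IsCollared f' (Hb.atTime 1) (Ht.atTime 1) ∧
      ∀ p, dist (f p) (f' p) < 2 * ε := by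
  obtain ⟨η, hη, hf⟩ := Metric.uniformContinuous_iff.1
    (CompactSpace.uniformContinuous_of_continuous f.continuous) ε hε
  have hclose : ∀ y (t t' : I), |(t : ℝ) - t'| < η → dist (f (y, t)) (f (y, t')) < ε :=
    fun y t t' h => hf (by rwa [dist_prod_same_left, Subtype.dist_eq, Real.dist_eq])
  set α := min (1 / 4) (η / 4)
  have hαη : 2 * α < η := by linarith [min_le_right (1 / 4) (η / 4)]
  obtain ⟨f', hf', hcases⟩ :=
    exists_collared_reparam f Hb Ht hb ht (α := α) (by positivity) (min_le_left _ _)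
  refine ⟨f', hf', fun ⟨y, t⟩ => ?_⟩
  rcases hcases (y, t) with ⟨s, hs, hts⟩ | ⟨t', hs, htt'⟩ | ⟨s, hs, hts⟩
  · have hyt : |(t : ℝ) - (0 : I)| < η := by
      rw [Set.Icc.coe_zero, sub_zero, abs_of_nonneg t.2.1]; linarith
    calc dist (f (y, t)) (f' (y, t))
        ≤ dist (f (y, t)) (f (y, 0)) + dist (f (y, 0)) (Hb (y, s)) := hs ▸ dist_triangle _ _ _
      _ < ε + ε := add_lt_add (hclose y t 0 hyt) (dist_comm (Hb _) _ ▸ hHb (y, s))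
      _ = 2 * ε := by ring
  · rw [hs]
    exact (hclose y t t' (by rw [abs_sub_comm]; linarith)).trans (by linarith)
  · have hyt : |(t : ℝ) - (1 : I)| < η := by
      rw [Set.Icc.coe_one, abs_of_nonpos (by linarith [t.2.2])]; linarith
    calc dist (f (y, t)) (f' (y, t))
        ≤ dist (f (y, t)) (f (y, 1)) + dist (f (y, 1)) (Ht (y, s)) := hs ▸ dist_triangle _ _ _
      _ < ε + ε := add_lt_add (hclose y t 1 hyt) (dist_comm (Ht _) _ ▸ hHt (y, s))
      _ = 2 * ε := by ring

theorem IsANR.exists_collared_near {X : Type u} [MetricSpace X] [Nonempty X]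
    [LocallyCompactSpace X] (hX : IsANR X) {Y : Type*} [PseudoMetricSpace Y] [CompactSpace Y]
    (f : C(Y × I, X)) {ε : ℝ} (hε : 0 < ε) :
    ∃ δ > 0, ∀ h k : C(Y, X), (∀ y, dist (f (y, 0)) (h y) < δ) →
      (∀ y, dist (f (y, 1)) (k y) < δ) →
        ∃ f' : C(Y × I, X), IsCollared f' h k ∧ ∀ p, dist (f p) (f' p) < ε := by
  obtain ⟨δ₀, hδ₀, hbot⟩ := hX.exists_small_homotopy (f.atTime 0) (half_pos hε)
  obtain ⟨δ₁, hδ₁, htop⟩ := hX.exists_small_homotopy (f.atTime 1) (half_pos hε)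
  refine ⟨min δ₀ δ₁, lt_min hδ₀ hδ₁, fun h k hh hk => ?_⟩
  obtain ⟨Hb, hb0, hb1, hbd⟩ := hbot h fun y => (hh y).trans_le (min_le_left _ _)
  obtain ⟨Ht, ht0, ht1, htd⟩ := htop k fun y => (hk y).trans_le (min_le_right _ _)
  obtain ⟨f', hf', hd⟩ := exists_collared_of_homotopies f Hb Ht hb0 ht0 (half_pos hε) hbd htd
  rw [show Hb.atTime 1 = h from ContinuousMap.ext hb1,
    show Ht.atTime 1 = k from ContinuousMap.ext ht1] at hf'
  exact ⟨f', hf', fun p => (hd p).trans_eq (mul_div_cancel₀ ε two_ne_zero)⟩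

theorem exists_pos_le_dist_of_disjoint_range {Y X : Type*} [TopologicalSpace Y] [CompactSpace Y]
    [MetricSpace X] {h₁ h₂ : C(Y, X)} (h : Disjoint (range h₁) (range h₂)) :
    ∃ δ > 0, ∀ y y', δ ≤ dist (h₁ y) (h₂ y') := by
  obtain ⟨δ, hδ, hdisj⟩ := h.exists_thickenings (isCompact_range h₁.continuous)
    (isCompact_range h₂.continuous).isClosed
  refine ⟨δ, hδ, fun y y' => le_of_not_gt fun hlt => hdisj.ne_of_mem
    (self_subset_thickening hδ _ (mem_range_self y))
    (mem_thickening_iff.2 ⟨h₂ y', mem_range_self y', hlt⟩) rfl⟩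

def ApartNearEnds {Y X : Type*} [TopologicalSpace Y] [PseudoMetricSpace X] (f₁ f₂ : C(Y × I, X))
    (β δ : ℝ) : Prop :=
  ∀ p q : Y × I, ((p.2 : ℝ) ≤ β ∧ (q.2 : ℝ) ≤ β) ∨ (1 - β ≤ (p.2 : ℝ) ∧ 1 - β ≤ (q.2 : ℝ)) →
    δ ≤ dist (f₁ p) (f₂ q)

theorem IsCollared.exists_apartNearEnds {Y X : Type*} [TopologicalSpace Y] [CompactSpace Y]
    [MetricSpace X] {f₁ f₂ : C(Y × I, X)} {h₁ h₂ k₁ k₂ : C(Y, X)} (hf₁ : IsCollared f₁ h₁ k₁)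
    (hf₂ : IsCollared f₂ h₂ k₂) (hh : Disjoint (range h₁) (range h₂))
    (hk : Disjoint (range k₁) (range k₂)) :
    ∃ β > 0, ∃ δ > 0, ApartNearEnds f₁ f₂ β δ := by
  obtain ⟨β₁, hβ₁, hf₁⟩ := hf₁
  obtain ⟨β₂, hβ₂, hf₂⟩ := hf₂
  obtain ⟨δh, hδh, hsep_h⟩ := exists_pos_le_dist_of_disjoint_range hh
  obtain ⟨δk, hδk, hsep_k⟩ := exists_pos_le_dist_of_disjoint_range hk
  refine ⟨min β₁ β₂, lt_min hβ₁ hβ₂, min δh δk, lt_min hδh hδk, fun p q hpq => ?_⟩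
  rcases hpq with ⟨hp, hq⟩ | ⟨hp, hq⟩
  · rw [(hf₁ p).1 (hp.trans (min_le_left _ _)), (hf₂ q).1 (hq.trans (min_le_right _ _))]
    exact (min_le_left _ _).trans (hsep_h _ _)
  · rw [(hf₁ p).2 ((sub_le_sub_left (min_le_left _ _) 1).trans hp),
      (hf₂ q).2 ((sub_le_sub_left (min_le_right _ _) 1).trans hq)]
    exact (min_le_right _ _).trans (hsep_k _ _)

theorem Set.eq_or_of_projIcc_eq {α : Type*} [LinearOrder α] {a b s s' : α} (hab : a < b)
    (h : projIcc a b hab.le s = projIcc a b hab.le s') :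
    s = s' ∨ (s ≤ a ∧ s' ≤ a) ∨ (b ≤ s ∧ b ≤ s') := by
  rcases le_or_gt s a with hsa | has
  · exact Or.inr (Or.inl ⟨hsa, (projIcc_eq_left hab).1 (h ▸ (projIcc_eq_left hab).2 hsa)⟩)
  rcases le_or_gt b s with hbs | hsb
  · exact Or.inr (Or.inr ⟨hbs, (projIcc_eq_right hab).1 (h ▸ (projIcc_eq_right hab).2 hbs)⟩)
  have has' : a < s' := lt_of_not_ge fun h' =>
    has.not_ge ((projIcc_eq_left hab).1 (h.trans ((projIcc_eq_left hab).2 h')))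
  have hsb' : s' < b := lt_of_not_ge fun h' =>
    hsb.not_ge ((projIcc_eq_right hab).1 (h.trans ((projIcc_eq_right hab).2 h')))
  rw [projIcc_of_mem _ ⟨has.le, hsb.le⟩, projIcc_of_mem _ ⟨has'.le, hsb'.le⟩] at h
  exact Or.inl (congrArg Subtype.val h)

theorem dist_fst_lt_of_sumDist_lt {X Y : Type*} [PseudoMetricSpace X] [PseudoMetricSpace Y]
    {a b : X × Y} {c : ℝ} (h : sumDist a b < c) : dist a.1 b.1 < c := by
  unfold sumDist at h; linarith [dist_nonneg (x := a.2) (y := b.2)]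

theorem dist_snd_lt_of_sumDist_lt {X Y : Type*} [PseudoMetricSpace X] [PseudoMetricSpace Y]
    {a b : X × Y} {c : ℝ} (h : sumDist a b < c) : dist a.2 b.2 < c := by
  unfold sumDist at h; linarith [dist_nonneg (x := a.1) (y := b.1)]

section Concordance

variable {X : Type*} [TopologicalSpace X]

def clampLevel {Z : Type*} [TopologicalSpace Z] (g : C(Z, X × ℝ)) : C(Z, X × I) :=
  ⟨fun z => ((g z).1, projIcc 0 1 zero_le_one (g z).2),
    (continuous_fst.comp g.continuous).prodMk
      (continuous_projIcc.comp (continuous_snd.comp g.continuous))⟩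

/-- The time coordinate is stretched by a margin `c` past both ends of `[0, 1]`, so that after
a perturbation smaller than `c` the ends still clamp to `0` and `1`. -/
def liftLevel {Y : Type*} [TopologicalSpace Y] (c : ℝ) (f : C(Y × I, X)) : C(Y × I, X × ℝ) :=
  ⟨fun p => (f p, (1 + 2 * c) * p.2 - c), by fun_prop⟩

theorem isPathConcordance_clampLevel {g : C(I × I, X × ℝ)} {c : ℝ}
    (hg : ∀ p : I × I, dist ((1 + 2 * c) * p.2 - c) (g p).2 < c) :
    IsPathConcordance (clampLevel g) := fun d => by
  have h0 := hg (d, 0)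
  have h1 := hg (d, 1)
  simp only [Set.Icc.coe_zero, Set.Icc.coe_one, Real.dist_eq, abs_lt] at h0 h1
  exact ⟨projIcc_eq_zero.2 (by linarith), projIcc_eq_one.2 (by linarith)⟩

end Concordance

theorem DDPsum.exists_disjoint_concordances {X : Type*} [MetricSpace X] (hDDP : DDPsum X)
    {f₁ f₂ : C(I × I, X)} {β δ : ℝ} (hβ : 0 < β) (hδ : 0 < δ)
    (hsep : ApartNearEnds f₁ f₂ β δ) {ε : ℝ} (hε : 0 < ε) :
    ∃ F₁ F₂ : C(I × I, X × I), IsPathConcordance F₁ ∧ IsPathConcordance F₂ ∧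
      range F₁ ∩ range F₂ = ∅ ∧ (∀ p, dist (f₁ p) (F₁ p).1 < ε) ∧
      (∀ p, dist (f₂ p) (F₂ p).1 < ε) := by
  set c := min ε (min δ β) / 2 with hc_def
  have hc : 0 < c := half_pos (lt_min hε (lt_min hδ hβ))
  have hcε : c ≤ ε := by linarith [min_le_left ε (min δ β)]
  have hcδ : 2 * c ≤ δ := by linarith [min_le_right ε (min δ β), min_le_left δ β]
  have hcβ : 2 * c ≤ β := by linarith [min_le_right ε (min δ β), min_le_right δ β]
  obtain ⟨g₁, g₂, hg₁, hg₂, hdisj⟩ := hDDP (liftLevel c f₁) (liftLevel c f₂) c hc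
  have hX₁ p := dist_fst_lt_of_sumDist_lt (hg₁ p)
  have hX₂ p := dist_fst_lt_of_sumDist_lt (hg₂ p)
  have hT₁ p := dist_snd_lt_of_sumDist_lt (hg₁ p)
  have hT₂ p := dist_snd_lt_of_sumDist_lt (hg₂ p)
  -- levels clamped to `0` or `1` come from times within `2 * c ≤ β` of the ends
  have hbot : ∀ (t : I) (s : ℝ), dist ((1 + 2 * c) * t - c) s < c → s ≤ 0 → (t : ℝ) ≤ β := by
    intro t s hs hs0
    rw [Real.dist_eq, abs_lt] at hs
    nlinarith [t.2.1]
  have htop : ∀ (t : I) (s : ℝ), dist ((1 + 2 * c) * t - c) s < c → 1 ≤ s → 1 - β ≤ (t : ℝ) := by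
    intro t s hs hs1
    rw [Real.dist_eq, abs_lt] at hs
    nlinarith [t.2.2]
  refine ⟨clampLevel g₁, clampLevel g₂, isPathConcordance_clampLevel hT₁,
    isPathConcordance_clampLevel hT₂, ?_, fun p => (hX₁ p).trans_le hcε,
    fun p => (hX₂ p).trans_le hcε⟩
  refine eq_empty_of_forall_notMem fun _ ⟨⟨p, hp⟩, ⟨q, hq⟩⟩ => ?_
  have hpq := hq.trans hp.symm
  have hfst : (g₂ q).1 = (g₁ p).1 := (Prod.ext_iff.1 hpq).1
  have hnear : dist (f₁ p) (f₂ q) < δ := by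
    calc dist (f₁ p) (f₂ q) ≤ dist (f₁ p) (g₁ p).1 + dist (g₂ q).1 (f₂ q) :=
          hfst ▸ dist_triangle _ _ _
      _ < c + c := add_lt_add (hX₁ p) (dist_comm (f₂ q) _ ▸ hX₂ q)
      _ ≤ δ := by linarith
  rcases eq_or_of_projIcc_eq zero_lt_one (Prod.ext_iff.1 hpq).2 with hsnd | ⟨h₂, h₁⟩ | ⟨h₂, h₁⟩
  · exact hdisj.subset ⟨⟨p, rfl⟩, ⟨q, Prod.ext hfst hsnd⟩⟩
  · exact hnear.not_ge (hsep p q (Or.inl ⟨hbot p.2 _ (hT₁ p) h₁, hbot q.2 _ (hT₂ q) h₂⟩))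
  · exact hnear.not_ge (hsep p q (Or.inr ⟨htop p.2 _ (hT₁ p) h₁, htop q.2 _ (hT₂ q) h₂⟩))

/-- If `X` is a locally compact metric ANR with the Disjoint Arcs Property and `X × ℝ`
(with the sum metric) has the Disjoint Disks Property, then `X` has the
Disjoint Path Concordances Property. -/
theorem dcp_of_ddp {X : Type u} [MetricSpace X] [LocallyCompactSpace X]
    (hANR : IsANR X) (hDAP : DAP X) (hDDP : DDPsum X) :
    DCP X := by
  intro f₁ f₂ ε hε
  have : Nonempty X := ⟨f₁ (0, 0)⟩
  obtain ⟨δ₁, hδ₁, hcol₁⟩ := hANR.exists_collared_near f₁ (half_pos hε)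
  obtain ⟨δ₂, hδ₂, hcol₂⟩ := hANR.exists_collared_near f₂ (half_pos hε)
  obtain ⟨h₁, h₂, hh₁, hh₂, hh⟩ := hDAP (f₁.atTime 0) (f₂.atTime 0) _ (lt_min hδ₁ hδ₂)
  obtain ⟨k₁, k₂, hk₁, hk₂, hk⟩ := hDAP (f₁.atTime 1) (f₂.atTime 1) _ (lt_min hδ₁ hδ₂)
  obtain ⟨f₁', hf₁', hd₁⟩ := hcol₁ h₁ k₁ (fun y => (hh₁ y).trans_le (min_le_left _ _))
    (fun y => (hk₁ y).trans_le (min_le_left _ _))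
  obtain ⟨f₂', hf₂', hd₂⟩ := hcol₂ h₂ k₂ (fun y => (hh₂ y).trans_le (min_le_right _ _))
    (fun y => (hk₂ y).trans_le (min_le_right _ _))
  obtain ⟨β, hβ, δ, hδ, hsep⟩ := hf₁'.exists_apartNearEnds hf₂' (disjoint_iff_inter_eq_empty.2 hh)
    (disjoint_iff_inter_eq_empty.2 hk)
  obtain ⟨F₁, F₂, hF₁, hF₂, hF, hF₁d, hF₂d⟩ :=
    hDDP.exists_disjoint_concordances hβ hδ hsep (half_pos hε)
  have close {f f' : C(I × I, X)} {F : C(I × I, X × I)} (hd : ∀ p, dist (f p) (f' p) < ε / 2)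
      (hFd : ∀ p, dist (f' p) (F p).1 < ε / 2) (p : I × I) : dist (f p) (F p).1 < ε :=
    (dist_triangle _ _ _).trans_lt ((add_lt_add (hd p) (hFd p)).trans_eq (add_halves ε))
  exact ⟨F₁, F₂, hF₁, hF₂, hF, close hd₁ hF₁d, close hd₂ hF₂d⟩
end
end

section
/- Let (X, ρ) be a metric space that is an ANR and satisfies the Disjoint Arcs Property. Let f₁, f₂ : D × I → X × I be level-preserving continuous maps, let t₀ < t₁ < … < t_m be finitely many points of I, and let ε > 0. Then there exist level-preserving continuous maps g₁, g₂ : D × I → X × I such that ρ̃(f_i(p), g_i(p)) < ε for all p ∈ D × I and g₁(D × {t_k}) ∩ g₂(D × {t_k}) = ∅ for every k = 0, 1, …, m. -/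
open unitInterval Topology

noncomputable section

/-- A map `f : D × I → X × I` is level preserving if `f(D × {t}) ⊆ X × {t}`
for every `t ∈ I`. -/
def IsLevelPreserving {X : Type*} [TopologicalSpace X] (f : C(I × I, X × I)) : Prop :=
  ∀ (d t : I), (f (d, t)).2 = t

/-!
Embed `X` isometrically in `X →ᵇ ℝ` by `x ↦ dist x · - dist x₀ ·`. The image is closed in its
convex hull (Wojdysławski), so the ANR property gives a retraction of a neighbourhood of `X` in
the hull. Uniformly close maps into a compact part of `X` are therefore joined by small
homotopies: follow the segments in the hull and retract.

Apply the Disjoint Arcs Property to the level paths of `f₁` and `f₂` at every `t k`. In a thin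
strip around each level, run the small homotopy from `fᵢ` to the new arc, so that the arc is
reached exactly at `t k` and `fᵢ` is recovered on the boundary of the strip. The strips are
disjoint, so these modifications glue to level-preserving maps.
-/

open Set Function BoundedContinuousFunction

section Kuratowski

variable {X : Type*} [PseudoMetricSpace X]

def kuratowskiBCF (x₀ x : X) : X →ᵇ ℝ :=
  mkOfBound ⟨fun y => dist x y - dist x₀ y, by fun_prop⟩ (2 * dist x x₀) fun y z => by
    have := abs_dist_sub_le x x₀ y
    have := abs_dist_sub_le x x₀ z
    rw [Real.dist_eq]
    calc |dist x y - dist x₀ y - (dist x z - dist x₀ z)|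
        ≤ |dist x y - dist x₀ y| + |dist x z - dist x₀ z| := abs_sub _ _
      _ ≤ 2 * dist x x₀ := by linarith

@[simp]
lemma kuratowskiBCF_apply (x₀ x y : X) : kuratowskiBCF x₀ x y = dist x y - dist x₀ y := rfl

lemma isometry_kuratowskiBCF (x₀ : X) : Isometry (kuratowskiBCF x₀) := by
  refine Isometry.of_dist_eq fun a b => le_antisymm ?_ ?_
  · refine (dist_le dist_nonneg).2 fun y => ?_
    rw [Real.dist_eq, kuratowskiBCF_apply, kuratowskiBCF_apply, sub_sub_sub_cancel_right]
    exact abs_dist_sub_le a b y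
  · simpa [Real.dist_eq] using
      dist_coe_le_dist (f := kuratowskiBCF x₀ a) (g := kuratowskiBCF x₀ b) b

-- The inequality holds for `z = kuratowskiBCF x₀ y` with `w = 1`, and survives convex combinations.
lemma exists_mul_dist_le_of_mem_convexHull (x₀ : X) {z : X →ᵇ ℝ}
    (hz : z ∈ convexHull ℝ (range (kuratowskiBCF x₀))) :
    ∃ y : X, ∃ w > (0 : ℝ), ∀ x, w * dist y x ≤ z x + dist x₀ x := by
  refine convexHull_min (t := {z | ∃ y : X, ∃ w > (0 : ℝ), ∀ x, w * dist y x ≤ z x + dist x₀ x})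
    ?_ ?_ hz
  · rintro _ ⟨y, rfl⟩
    exact ⟨y, 1, one_pos, fun x => by simp⟩
  · rintro z₁ ⟨y₁, w₁, hw₁, h₁⟩ z₂ ⟨y₂, w₂, hw₂, h₂⟩ a b ha hb hab
    have hval : ∀ x, (a • z₁ + b • z₂) x + dist x₀ x =
        a * (z₁ x + dist x₀ x) + b * (z₂ x + dist x₀ x) := fun x => by
      simp only [coe_add, coe_smul, Pi.add_apply, smul_eq_mul]
      linear_combination (dist x₀ x) * hab.symm
    rcases ha.eq_or_lt with rfl | ha
    · refine ⟨y₂, b * w₂, by simp_all, fun x => ?_⟩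
      rw [hval]
      nlinarith [h₁ x, h₂ x, dist_nonneg (x := y₁) (y := x)]
    · refine ⟨y₁, a * w₁, by positivity, fun x => ?_⟩
      rw [hval]
      nlinarith [h₁ x, h₂ x, dist_nonneg (x := y₂) (y := x), mul_nonneg hb hw₂.le]

lemma mem_range_kuratowskiBCF_of_mem_closure (x₀ : X) {z : X →ᵇ ℝ}
    (hcl : z ∈ closure (range (kuratowskiBCF x₀)))
    (hz : z ∈ convexHull ℝ (range (kuratowskiBCF x₀))) : z ∈ range (kuratowskiBCF x₀) := by
  obtain ⟨y, w, hw, hyz⟩ := exists_mul_dist_le_of_mem_convexHull x₀ hz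
  have key : ∀ x, dist (kuratowskiBCF x₀ y) z ≤ (w⁻¹ + 1) * dist z (kuratowskiBCF x₀ x) := by
    intro x
    set e := dist z (kuratowskiBCF x₀ x)
    have hzx : z x + dist x₀ x ≤ e := by
      have := dist_coe_le_dist (f := z) (g := kuratowskiBCF x₀ x) x
      rw [Real.dist_eq, kuratowskiBCF_apply, dist_self, zero_sub, sub_neg_eq_add] at this
      exact (le_abs_self _).trans this
    have hyx : dist y x ≤ w⁻¹ * e := by
      rw [inv_mul_eq_div, le_div_iff₀ hw]
      linarith [hyz x]
    calc dist (kuratowskiBCF x₀ y) z ≤ dist (kuratowskiBCF x₀ y) (kuratowskiBCF x₀ x) + e :=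
          dist_triangle_right _ _ _
      _ = dist y x + e := by rw [(isometry_kuratowskiBCF x₀).dist_eq]
      _ ≤ (w⁻¹ + 1) * e := by linarith
  refine ⟨y, eq_of_forall_dist_le fun ε hε => ?_⟩
  obtain ⟨x, hx⟩ := Metric.mem_closure_range_iff.1 hcl (ε / (w⁻¹ + 1)) (by positivity)
  calc dist (kuratowskiBCF x₀ y) z ≤ (w⁻¹ + 1) * dist z (kuratowskiBCF x₀ x) := key x
    _ ≤ (w⁻¹ + 1) * (ε / (w⁻¹ + 1)) := by gcongr
    _ = ε := by field_simp

end Kuratowski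

section ANR

variable {X : Type u} [MetricSpace X]

def toKuratowskiHull (x₀ x : X) : convexHull ℝ (range (kuratowskiBCF x₀)) :=
  ⟨kuratowskiBCF x₀ x, subset_convexHull ℝ _ (mem_range_self x)⟩

lemma isometry_toKuratowskiHull (x₀ : X) : Isometry (toKuratowskiHull x₀) :=
  Isometry.of_dist_eq (isometry_kuratowskiBCF x₀).dist_eq

lemma isClosedEmbedding_toKuratowskiHull (x₀ : X) :
    IsClosedEmbedding (toKuratowskiHull x₀) := by
  refine ⟨(isometry_toKuratowskiHull x₀).isEmbedding, ?_⟩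
  have : range (toKuratowskiHull x₀) = (↑) ⁻¹' closure (range (kuratowskiBCF x₀)) := by
    ext z
    refine ⟨?_, fun hz => ?_⟩
    · rintro ⟨x, rfl⟩
      exact subset_closure (mem_range_self x)
    · obtain ⟨x, hx⟩ := mem_range_kuratowskiBCF_of_mem_closure x₀ hz z.2
      exact ⟨x, Subtype.ext hx⟩
  rw [this]
  exact isClosed_closure.preimage continuous_subtype_val

lemma IsANR.exists_retraction_kuratowskiHull (hX : IsANR X) (x₀ : X) :
    ∃ U : Set (convexHull ℝ (range (kuratowskiBCF x₀))), IsOpen U ∧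
      ∃ hU : range (toKuratowskiHull x₀) ⊆ U, ∃ ρ : C(U, X),
        ∀ x, ρ ⟨toKuratowskiHull x₀ x, hU (mem_range_self x)⟩ = x := by
  obtain ⟨U, hUo, hU, r, hr, hr_id⟩ := hX _ _ (isClosedEmbedding_toKuratowskiHull x₀)
  let e := (isometry_toKuratowskiHull x₀).isometryEquivOnRange
  refine ⟨U, hUo, hU, ⟨fun u => e.symm ⟨r u, hr u⟩, by fun_prop⟩, fun x => ?_⟩
  have : (⟨r ⟨_, hU (mem_range_self x)⟩, hr _⟩ : range _) = e x :=
    Subtype.ext (hr_id _ (mem_range_self x))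
  exact (congrArg e.symm this).trans (e.symm_apply_apply x)

lemma IsANR.exists_retraction_thickening (hX : IsANR X) (x₀ : X) {K : Set X} (hK : IsCompact K)
    {ε : ℝ} (hε : 0 < ε) :
    ∃ δ > 0, ∃ ρ : C(Metric.thickening δ (toKuratowskiHull x₀ '' K), X),
      (∀ x hx, ρ ⟨toKuratowskiHull x₀ x, hx⟩ = x) ∧
        ∀ z, dist (toKuratowskiHull x₀ (ρ z)) z < ε := by
  obtain ⟨U, hUo, hU, ρ, hρ⟩ := hX.exists_retraction_kuratowskiHull x₀
  have hj := isometry_toKuratowskiHull x₀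
  let V : Set (convexHull ℝ (range (kuratowskiBCF x₀))) :=
    Subtype.val '' {u : U | dist (toKuratowskiHull x₀ (ρ u)) u < ε}
  have hVo : IsOpen V := hUo.isOpenMap_subtype_val _ <|
    isOpen_lt ((hj.continuous.comp ρ.continuous).dist continuous_subtype_val) continuous_const
  have hKV : toKuratowskiHull x₀ '' K ⊆ V := by
    rintro _ ⟨x, -, rfl⟩
    exact ⟨⟨_, hU (mem_range_self x)⟩, by simpa [hρ] using hε, rfl⟩
  obtain ⟨δ, hδ, hδV⟩ := (hK.image hj.continuous).exists_thickening_subset_open hVo hKV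
  have hδU : ∀ z ∈ Metric.thickening δ (toKuratowskiHull x₀ '' K), z ∈ U := fun z hz => by
    obtain ⟨u, -, rfl⟩ := hδV hz
    exact u.2
  refine ⟨δ, hδ, ρ.comp ⟨fun z => ⟨z, hδU z z.2⟩, by fun_prop⟩, fun x hx => hρ x, fun z => ?_⟩
  obtain ⟨u, hu, hzu⟩ := hδV z.2
  have : (⟨z, hδU z z.2⟩ : U) = u := Subtype.ext hzu.symm
  show dist (toKuratowskiHull x₀ (ρ ⟨z, hδU z z.2⟩)) z < ε
  rwa [this, ← hzu]

theorem IsANR.exists_homotopy_of_dist_lt (hX : IsANR X) [Nonempty X] {K : Set X}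
    (hK : IsCompact K) {ε : ℝ} (hε : 0 < ε) :
    ∃ δ > 0, ∀ {Y : Type*} [TopologicalSpace Y] (a b : C(Y, X)), (∀ y, a y ∈ K) →
      (∀ y, dist (a y) (b y) < δ) → ∃ H : a.Homotopy b, ∀ s y, dist (H (s, y)) (a y) < ε := by
  obtain ⟨x₀⟩ := ‹Nonempty X›
  obtain ⟨δ, hδ, ρ, hρ, hρε⟩ := hX.exists_retraction_thickening x₀ hK (half_pos hε)
  have hj := isometry_toKuratowskiHull x₀
  generalize toKuratowskiHull x₀ = j at *
  refine ⟨min δ (ε / 2), by positivity, fun {Y} _ a b ha hab => ?_⟩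
  let P : I × Y → convexHull ℝ (range (kuratowskiBCF x₀)) := fun p =>
    ⟨AffineMap.lineMap (j (a p.2)).1 (j (b p.2)).1 (p.1 : ℝ),
      (convex_convexHull ℝ _).lineMap_mem (j (a p.2)).2 (j (b p.2)).2 p.1.2⟩
  have hP : Continuous P := by
    refine Continuous.subtype_mk (Continuous.lineMap ?_ ?_ (by fun_prop)) _ <;>
      exact continuous_subtype_val.comp (hj.continuous.comp (by fun_prop))
  have hPa : ∀ p, dist (P p) (j (a p.2)) < min δ (ε / 2) := fun p => by
    calc dist (P p) (j (a p.2)) = ‖(p.1 : ℝ)‖ * dist (a p.2) (b p.2) := by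
          rw [Subtype.dist_eq, dist_lineMap_left, ← Subtype.dist_eq, hj.dist_eq]
      _ ≤ 1 * dist (a p.2) (b p.2) := by
          gcongr
          rw [Real.norm_of_nonneg p.1.2.1]
          exact p.1.2.2
      _ < min δ (ε / 2) := by rw [one_mul]; exact hab p.2
  have hPK : ∀ p, P p ∈ Metric.thickening δ (j '' K) := fun p =>
    Metric.mem_thickening_iff.2 ⟨_, mem_image_of_mem _ (ha p.2), (hPa p).trans_le (min_le_left _ _)⟩
  have hPend : ∀ s x y, P (s, y) = j x → ρ ⟨P (s, y), hPK (s, y)⟩ = x := fun s x y h => by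
    rw [← hρ x (h ▸ hPK (s, y))]
    exact congrArg ρ (Subtype.ext h)
  refine ⟨⟨⟨fun p => ρ ⟨P p, hPK p⟩, ρ.continuous.comp (hP.subtype_mk _)⟩,
    fun y => hPend 0 _ y (Subtype.ext (AffineMap.lineMap_apply_zero _ _)),
    fun y => hPend 1 _ y (Subtype.ext (AffineMap.lineMap_apply_one _ _))⟩, fun s y => ?_⟩
  rw [← hj.dist_eq]
  calc dist (j (ρ ⟨P (s, y), _⟩)) (j (a y))
      ≤ dist (j (ρ ⟨P (s, y), _⟩)) (P (s, y)) + dist (P (s, y)) (j (a y)) := dist_triangle _ _ _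
    _ < ε / 2 + ε / 2 := add_lt_add (hρε _) ((hPa (s, y)).trans_le (min_le_right _ _))
    _ = ε := add_halves ε

end ANR

theorem ContinuousMap.exists_eqOn_of_eqOn_frontier {Y Z ι : Type*} [TopologicalSpace Y]
    [TopologicalSpace Z] [Finite ι] {A : ι → Set Y} (hA : ∀ i, IsClosed (A i))
    (hdisj : Pairwise (Disjoint on A)) (φ : C(Y, Z)) (S : ι → C(Y, Z))
    (hS : ∀ i, EqOn (S i) φ (frontier (A i))) :
    ∃ γ : C(Y, Z), (∀ i, EqOn γ (S i) (A i)) ∧ EqOn γ φ (⋃ i, A i)ᶜ := by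
  classical
  let γ : Y → Z := fun y => if h : ∃ i, y ∈ A i then S h.choose y else φ y
  have hγS : ∀ i, EqOn γ (S i) (A i) := fun i y hy => by
    have h : ∃ i, y ∈ A i := ⟨i, hy⟩
    have hi : h.choose = i := hdisj.eq (not_disjoint_iff.2 ⟨y, h.choose_spec, hy⟩)
    simp only [γ, dif_pos h, hi]
  let B := ⋂ i, (interior (A i))ᶜ
  have hγφ : EqOn γ φ B := fun y hy => by
    by_cases h : ∃ i, y ∈ A i
    · obtain ⟨i, hi⟩ := h
      rw [hγS i hi]
      exact hS i ⟨(hA i).closure_eq.symm ▸ hi, mem_iInter.1 hy i⟩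
    · simp only [γ, dif_neg h]
  have hγ : Continuous γ := by
    refine (locallyFinite_of_finite fun o : Option ι => o.elim B A).continuous ?_ ?_ ?_
    · refine eq_univ_of_forall fun y => ?_
      by_cases h : ∃ i, y ∈ A i
      · obtain ⟨i, hi⟩ := h
        exact mem_iUnion.2 ⟨some i, hi⟩
      · exact mem_iUnion.2 ⟨none, mem_iInter.2 fun i hi => h ⟨i, interior_subset hi⟩⟩
    · rintro (_ | i)
      · exact isClosed_iInter fun i => isOpen_interior.isClosed_compl
      · exact hA i
    · rintro (_ | i)
      · exact φ.continuous.continuousOn.congr hγφ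
      · exact (S i).continuous.continuousOn.congr (hγS i)
  refine ⟨⟨γ, hγ⟩, hγS, fun y hy => hγφ ?_⟩
  exact mem_iInter.2 fun i hi => hy (mem_iUnion.2 ⟨i, interior_subset hi⟩)

theorem ContinuousMap.exists_forall_dist_lt_of_dist_lt {D Y X : Type*} [TopologicalSpace D]
    [CompactSpace D] [PseudoMetricSpace Y] [CompactSpace Y] [PseudoMetricSpace X]
    (φ : C(D × Y, X)) {ε : ℝ} (hε : 0 < ε) :
    ∃ η > 0, ∀ d y y', dist y y' < η → dist (φ (d, y)) (φ (d, y')) < ε := by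
  let ψ : C(Y, C(D, X)) := (φ.comp ContinuousMap.prodSwap).curry
  obtain ⟨η, hη, hψ⟩ := Metric.uniformContinuous_iff.1
    (CompactSpace.uniformContinuous_of_continuous ψ.continuous) ε hε
  exact ⟨η, hη, fun d y y' h => (ψ y).dist_apply_le_dist (g := ψ y') d |>.trans_lt (hψ h)⟩

theorem exists_pos_forall_lt_dist {ι α : Type*} [Finite ι] [MetricSpace α] {t : ι → α}
    (ht : Injective t) {η : ℝ} (hη : 0 < η) :
    ∃ r, 0 < r ∧ r < η ∧ ∀ k l, k ≠ l → 2 * r < dist (t k) (t l) := by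
  have hsep : ∀ᶠ r in 𝓝 (0 : ℝ), ∀ k l, k ≠ l → 2 * r < dist (t k) (t l) := by
    refine Filter.eventually_all.2 fun k => Filter.eventually_all.2 fun l => ?_
    rcases eq_or_ne k l with rfl | hkl
    · exact .of_forall fun _ h => absurd rfl h
    · filter_upwards [eventually_lt_nhds (half_pos (dist_pos.2 (ht.ne hkl)))] with r hr _
      linarith
  obtain ⟨r, ⟨hrη, hr⟩, hr0⟩ := (((eventually_lt_nhds hη).and hsep).filter_mono
    nhdsWithin_le_nhds |>.and self_mem_nhdsWithin).exists (f := 𝓝[>] (0 : ℝ))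
  exact ⟨r, hr0, hrη, hr⟩

namespace unitInterval

def clampNear (c : I) (r : ℝ) (s : I) : I :=
  projIcc 0 1 zero_le_one (max (c - r) (min (c + r) s))

lemma continuous_clampNear (c : I) (r : ℝ) : Continuous (clampNear c r) :=
  continuous_projIcc.comp (by fun_prop)

lemma dist_clampNear_le (c : I) {r : ℝ} (hr : 0 ≤ r) (s : I) : dist (clampNear c r s) c ≤ r := by
  obtain ⟨hc0, hc1⟩ := c.2
  rw [Subtype.dist_eq, clampNear, coe_projIcc, Real.dist_eq, abs_le]
  constructor <;> grind

lemma clampNear_eq_self {c : I} {r : ℝ} {s : I} (h : dist s c ≤ r) : clampNear c r s = s := by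
  rw [Subtype.dist_eq, Real.dist_eq, abs_le] at h
  rw [clampNear, min_eq_right (by linarith), max_eq_right (by linarith), projIcc_val]

def ramp (c : I) (r : ℝ) (s : I) : I :=
  projIcc 0 1 zero_le_one (1 - dist s c / r)

lemma continuous_ramp (c : I) (r : ℝ) : Continuous (ramp c r) :=
  continuous_projIcc.comp (by fun_prop)

lemma ramp_self (c : I) (r : ℝ) : ramp c r c = 1 := by
  simp only [ramp, dist_self, zero_div, sub_zero]
  exact projIcc_right _

lemma ramp_eq_zero {c : I} {r : ℝ} (hr : r ≠ 0) {s : I} (h : dist s c = r) : ramp c r s = 0 := by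
  simp only [ramp, h, div_self hr, sub_self]
  exact projIcc_left _

end unitInterval

section Levels

variable {D X : Type*} [TopologicalSpace D] [PseudoMetricSpace X]

def levelClamp (φ : C(D × I, X)) (c : I) (r : ℝ) : C(D × I, X) :=
  ⟨fun p => φ (p.1, clampNear c r p.2),
    φ.continuous.comp (continuous_fst.prodMk ((continuous_clampNear c r).comp continuous_snd))⟩

lemma levelClamp_apply_of_dist_le (φ : C(D × I, X)) {c : I} {r : ℝ} {p : D × I}
    (h : dist p.2 c ≤ r) : levelClamp φ c r p = φ p :=
  congrArg φ (Prod.ext rfl (clampNear_eq_self h))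

/-- In the strip `dist s (t k) ≤ r`, `γ` runs the homotopy `H k` from `φ`, reached on the boundary
of the strip, to `β k`, reached at the level `t k` itself. -/
theorem exists_eq_levels_of_homotopy {ι : Type*} [Finite ι] (φ : C(D × I, X)) {t : ι → I}
    {r : ℝ} (hr : 0 < r) (hsep : ∀ k l, k ≠ l → 2 * r < dist (t k) (t l)) (β : ι → C(D, X))
    (H : ∀ k, (levelClamp φ (t k) r).Homotopy ((β k).comp ContinuousMap.fst)) {ε : ℝ}
    (hε : 0 < ε) (hH : ∀ k s p, dist (H k (s, p)) (levelClamp φ (t k) r p) < ε) :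
    ∃ γ : C(D × I, X), (∀ p, dist (φ p) (γ p) < ε) ∧ ∀ k d, γ (d, t k) = β k d := by
  let S : ι → C(D × I, X) := fun k => (H k).toContinuousMap.comp
    ⟨fun p => (ramp (t k) r p.2, p), ((continuous_ramp _ _).comp continuous_snd).prodMk
      continuous_id⟩
  let A : ι → Set (D × I) := fun k => {p | dist p.2 (t k) ≤ r}
  have hA : ∀ k, IsClosed (A k) := fun k => isClosed_le (by fun_prop) continuous_const
  have hAdisj : Pairwise (Disjoint on A) := fun k l hkl => Set.disjoint_left.2 fun p hk hl => by
    have := dist_triangle_left (t k) (t l) p.2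
    have := hsep k l hkl
    simp only [A, mem_ofPred_eq] at hk hl
    linarith
  have hS : ∀ k, EqOn (S k) φ (frontier (A k)) := fun k p hp => by
    have hpr : dist p.2 (t k) = r :=
      frontier_le_subset_eq (f := fun p : D × I => dist p.2 (t k)) (by fun_prop) continuous_const hp
    show H k (ramp (t k) r p.2, p) = φ p
    rw [ramp_eq_zero hr.ne' hpr, (H k).apply_zero, levelClamp_apply_of_dist_le φ hpr.le]
  obtain ⟨γ, hγS, hγφ⟩ := ContinuousMap.exists_eqOn_of_eqOn_frontier hA hAdisj φ S hS
  refine ⟨γ, fun p => ?_, fun k d => ?_⟩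
  · by_cases hp : p ∈ ⋃ k, A k
    · obtain ⟨k, hk⟩ := mem_iUnion.1 hp
      rw [hγS k hk, dist_comm, ← levelClamp_apply_of_dist_le φ hk]
      exact hH k _ _
    · rw [hγφ hp, dist_self]
      exact hε
  · rw [hγS k (show dist (t k) (t k) ≤ r by simpa using hr.le)]
    show H k (ramp (t k) r (t k), (d, t k)) = β k d
    rw [ramp_self, (H k).apply_one]
    rfl

end Levels

theorem IsANR.exists_approx_through_levels {X : Type u} [MetricSpace X] (hX : IsANR X)
    [Nonempty X] {D ι : Type*} [TopologicalSpace D] [CompactSpace D] [Finite ι]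
    (φ : C(D × I, X)) {t : ι → I} (ht : Injective t) {ε : ℝ} (hε : 0 < ε) :
    ∃ δ > 0, ∀ β : ι → C(D, X), (∀ k d, dist (φ (d, t k)) (β k d) < δ) →
      ∃ γ : C(D × I, X), (∀ p, dist (φ p) (γ p) < ε) ∧ ∀ k d, γ (d, t k) = β k d := by
  obtain ⟨δ, hδ, hhom⟩ := hX.exists_homotopy_of_dist_lt (isCompact_range φ.continuous) hε
  obtain ⟨η, hη, hφη⟩ := φ.exists_forall_dist_lt_of_dist_lt (half_pos hδ)
  obtain ⟨r, hr, hrη, hsep⟩ := exists_pos_forall_lt_dist ht hη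
  refine ⟨δ / 2, half_pos hδ, fun β hβ => ?_⟩
  have hclose : ∀ k p, dist (levelClamp φ (t k) r p) (β k p.1) < δ := fun k p => by
    calc dist (levelClamp φ (t k) r p) (β k p.1)
        ≤ dist (levelClamp φ (t k) r p) (φ (p.1, t k)) + dist (φ (p.1, t k)) (β k p.1) :=
          dist_triangle _ _ _
      _ < δ / 2 + δ / 2 :=
          add_lt_add (hφη _ _ _ ((dist_clampNear_le _ hr.le _).trans_lt hrη)) (hβ k p.1)
      _ = δ := add_halves δ
  choose H hH using fun k => hhom (levelClamp φ (t k) r) ((β k).comp ContinuousMap.fst)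
    (fun p => mem_range_self _) (hclose k)
  exact exists_eq_levels_of_homotopy φ hr hsep β H hε hH

lemma IsLevelPreserving.sumDist_prodMk_snd {X : Type*} [PseudoMetricSpace X]
    {f : C(I × I, X × I)} (hf : IsLevelPreserving f) (γ : C(I × I, X)) (p : I × I) :
    sumDist (f p) (γ.prodMk ContinuousMap.snd p) = dist (f p).1 (γ p) := by
  simp [sumDist, hf p.1 p.2]

/-- If `X` is a metric ANR with the Disjoint Arcs Property, then any two
level-preserving maps `f₁, f₂ : D × I → X × I` can be approximated, arbitrarily closely
in the sum metric on `X × I`, by level-preserving maps `g₁, g₂` whose level images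
`g₁(D × {t k})` and `g₂(D × {t k})` are disjoint at each of finitely many prescribed
levels `t 0 < t 1 < ⋯ < t m` in `I`. -/
theorem disjoint_at_finitely_many_levels {X : Type u} [MetricSpace X]
    (hANR : IsANR X) (hDAP : DAP X)
    (f₁ f₂ : C(I × I, X × I)) (h₁ : IsLevelPreserving f₁) (h₂ : IsLevelPreserving f₂)
    (m : ℕ) (t : Fin (m + 1) → I) (ht : StrictMono t) (ε : ℝ) (hε : 0 < ε) :
    ∃ g₁ g₂ : C(I × I, X × I),
      IsLevelPreserving g₁ ∧ IsLevelPreserving g₂ ∧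
      (∀ p, sumDist (f₁ p) (g₁ p) < ε) ∧ (∀ p, sumDist (f₂ p) (g₂ p) < ε) ∧
      ∀ k, (Set.range fun d => g₁ (d, t k)) ∩ (Set.range fun d => g₂ (d, t k)) = ∅ := by
  have : Nonempty X := ⟨(f₁ (0, 0)).1⟩
  let φ₁ := ContinuousMap.fst.comp f₁
  let φ₂ := ContinuousMap.fst.comp f₂
  obtain ⟨δ₁, hδ₁, hγ₁⟩ := hANR.exists_approx_through_levels φ₁ ht.injective hε
  obtain ⟨δ₂, hδ₂, hγ₂⟩ := hANR.exists_approx_through_levels φ₂ ht.injective hε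
  choose β₁ β₂ hβ₁ hβ₂ hβ using fun k => hDAP (φ₁.comp (.prodMk (.id I) (.const I (t k))))
    (φ₂.comp (.prodMk (.id I) (.const I (t k)))) (min δ₁ δ₂) (lt_min hδ₁ hδ₂)
  obtain ⟨γ₁, hγ₁ε, hγ₁t⟩ := hγ₁ β₁ fun k d => (hβ₁ k d).trans_le (min_le_left _ _)
  obtain ⟨γ₂, hγ₂ε, hγ₂t⟩ := hγ₂ β₂ fun k d => (hβ₂ k d).trans_le (min_le_right _ _)
  refine ⟨γ₁.prodMk .snd, γ₂.prodMk .snd, fun _ _ => rfl, fun _ _ => rfl,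
    fun p => (h₁.sumDist_prodMk_snd γ₁ p).trans_lt (hγ₁ε p),
    fun p => (h₂.sumDist_prodMk_snd γ₂ p).trans_lt (hγ₂ε p), fun k => ?_⟩
  refine eq_empty_iff_forall_notMem.2 ?_
  rintro _ ⟨⟨d₁, rfl⟩, d₂, h⟩
  have h' : β₂ k d₂ = β₁ k d₁ := by
    rw [← hγ₁t, ← hγ₂t]
    exact congrArg Prod.fst h
  exact (hβ k).subset ⟨mem_range_self d₁, d₂, h'⟩
end
end
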